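/- In any Conway semiring S, for all a, b, c, d, i, j ∈ S one has (d + c·a*·b)*·c·a*·i + (d + c·a*·b)*·j = d*·( j + c·(a + b·d*·c)*·(i + b·d*·j) ). -/
import Mathlib


/-- A Conway semiring: a semiring equipped with a star operation satisfying
the sum star identity `(a+b)* = a*·(b·a*)*` and
the product star identity `(a·b)* = 1 + a·(b·a)*·b`. -/
class ConwaySemiring (S : Type) extends Semiring S where
  astar : S → S
  sum_star : ∀ a b : S, astar (a + b) = astar a * astar (b * astar a)
  prod_star : ∀ a b : S, astar (a * b) = 1 + a * astar (b * a) * b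

open ConwaySemiring

lemma star_unfold_right {S : Type} [ConwaySemiring S] (x : S) :
    astar x = 1 + astar x * x := by
  have h := prod_star (1 : S) x
  simpa using h

lemma core {S : Type} [ConwaySemiring S] (x y u v : S) :
    astar (x * y) * (x * u + v) = v + x * astar (y * x) * (u + y * v) := by
  rw [prod_star x y]
  set A := astar (y * x) with hA
  have h2 : x * A * u = x * u + x * A * (y * x) * u := by
    conv_lhs => rw [hA, star_unfold_right (y * x), ← hA]
    noncomm_ring
  calc (1 + x * A * y) * (x * u + v)
      = v + (x * u + x * A * (y * x) * u) + x * A * (y * v) := by noncomm_ring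
    _ = v + x * A * u + x * A * (y * v) := by rw [← h2]
    _ = v + x * A * (u + y * v) := by noncomm_ring

/-- In any Conway semiring,
`(d + c·a*·b)*·c·a*·i + (d + c·a*·b)*·j = d*·(j + c·(a + b·d*·c)*·(i + b·d*·j))`. -/
theorem statement4 (S : Type) [ConwaySemiring S] (a b c d i j : S) :
    astar (d + c * astar a * b) * c * astar a * i
      + astar (d + c * astar a * b) * j
      = astar d * (j + c * astar (a + b * astar d * c) * (i + b * astar d * j)) := by
  have hx : c * astar a * b * astar d = (c * astar a) * (b * astar d) := by
    rw [mul_assoc]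
  have hy : b * astar d * c * astar a = (b * astar d) * (c * astar a) := by
    rw [mul_assoc]
  rw [sum_star d (c * astar a * b), sum_star a (b * astar d * c), hx, hy]
  have h := core (c * astar a) (b * astar d) i j
  calc astar d * astar ((c * astar a) * (b * astar d)) * c * astar a * i
        + astar d * astar ((c * astar a) * (b * astar d)) * j
      = astar d * (astar ((c * astar a) * (b * astar d)) * ((c * astar a) * i + j)) := by
        noncomm_ring
    _ = astar d * (j + (c * astar a) * astar ((b * astar d) * (c * astar a))
          * (i + (b * astar d) * j)) := by rw [h]
    _ = astar d * (j + c * (astar a * astar ((b * astar d) * (c * astar a)))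
          * (i + b * astar d * j)) := by noncomm_ring
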